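/- arXiv:1309.0648 — 2 statements merged into one kernel-verified Lean document; each statement's English description precedes it below -/
import Mathlib

section
/- For a prime p, a positive integer m with p-adic valuation α (i.e. p^α || m), and a real number s > 1, one has ∑_{ν=0}^{∞} a_m(p^ν)/p^{νs} = (1 - p^{-s})·(1 + p^{-(s-1)} + p^{-2(s-1)} + ... + p^{-α(s-1)}), where a_m(n) = μ(n/gcd(m,n))·φ(n)/φ(n/gcd(m,n)). -/
/-- The coefficients `a_m(n) = μ(n/gcd(m,n)) · φ(n)/φ(n/gcd(m,n))`. -/
noncomputable def ramanujanCoeff (m n : ℕ) : ℚ :=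
  ((ArithmeticFunction.moebius (n / Nat.gcd m n) : ℤ) : ℚ) *
    (Nat.totient n : ℚ) / (Nat.totient (n / Nat.gcd m n) : ℚ)

/-!
Write `α = v_p(m)` and `x = p^{-s}`. Since `gcd(m, p^ν) = p^{min(α, ν)}`, the coefficient
`a_m(p^ν)` is `φ(p^ν)` for `ν ≤ α`, equals `μ(p) φ(p^{α+1}) / φ(p) = -p^α` for `ν = α + 1`, and
vanishes for `ν ≥ α + 2` because `μ(p^k) = 0` for `k ≥ 2`. The series is therefore the polynomial
`∑_{ν ≤ α} φ(p^ν) x^ν - p^α x^{α+1}`, and since `φ(p^{ν+1}) = p^{ν+1} - p^ν` it telescopes to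
`(1 - x) ∑_{j ≤ α} (p x)^j`.
-/

open Finset

namespace Nat

theorem gcd_prime_pow_eq_pow_min {p m : ℕ} (hp : p.Prime) (hm : m ≠ 0) (ν : ℕ) :
    m.gcd (p ^ ν) = p ^ min (m.factorization p) ν := by
  obtain ⟨i, -, hi⟩ := (Nat.dvd_prime_pow hp).mp (Nat.gcd_dvd_right m (p ^ ν))
  have hfac := congrArg (· p) (Nat.factorization_gcd hm (pow_ne_zero ν hp.ne_zero))
  simp only [hi, hp.factorization_pow, Finsupp.single_eq_same, Finsupp.inf_apply] at hfac
  rw [hi, hfac]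

theorem prime_pow_div_gcd {p m : ℕ} (hp : p.Prime) (hm : m ≠ 0) (ν : ℕ) :
    p ^ ν / m.gcd (p ^ ν) = p ^ (ν - m.factorization p) := by
  rw [gcd_prime_pow_eq_pow_min hp hm, Nat.pow_div (min_le_right _ _) hp.pos]
  congr 1
  omega

end Nat

section RamanujanCoeff

variable {p m : ℕ}

theorem ramanujanCoeff_prime_pow_of_le (hp : p.Prime) (hm : m ≠ 0) {ν : ℕ}
    (hν : ν ≤ m.factorization p) : ramanujanCoeff m (p ^ ν) = Nat.totient (p ^ ν) := by
  rw [ramanujanCoeff, Nat.prime_pow_div_gcd hp hm, Nat.sub_eq_zero_of_le hν]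
  simp

theorem ramanujanCoeff_prime_pow_factorization_succ (hp : p.Prime) (hm : m ≠ 0) :
    ramanujanCoeff m (p ^ (m.factorization p + 1)) = -(p : ℚ) ^ m.factorization p := by
  have hp1 : (p : ℚ) - 1 ≠ 0 := sub_ne_zero.mpr (by exact_mod_cast hp.one_lt.ne')
  rw [ramanujanCoeff, Nat.prime_pow_div_gcd hp hm, Nat.add_sub_cancel_left, pow_one,
    ArithmeticFunction.moebius_apply_prime hp, Nat.totient_prime_pow_succ hp,
    Nat.totient_prime hp]
  push_cast [Nat.cast_sub hp.one_le]
  field_simp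

theorem ramanujanCoeff_prime_pow_of_lt (hp : p.Prime) (hm : m ≠ 0) {ν : ℕ}
    (hν : m.factorization p + 1 < ν) : ramanujanCoeff m (p ^ ν) = 0 := by
  rw [ramanujanCoeff, Nat.prime_pow_div_gcd hp hm,
    ArithmeticFunction.moebius_apply_prime_pow hp (by omega), if_neg (by omega)]
  simp

end RamanujanCoeff

theorem sum_totient_prime_pow_mul_pow {R : Type*} [CommRing R] {p : ℕ} (hp : p.Prime)
    (x : R) (α : ℕ) :
    ∑ ν ∈ range (α + 1), (Nat.totient (p ^ ν) : R) * x ^ ν - (p : R) ^ α * x ^ (α + 1) =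
      (1 - x) * ∑ j ∈ range (α + 1), ((p : R) * x) ^ j := by
  induction α with
  | zero => simp
  | succ α ih =>
    rw [sum_range_succ, sum_range_succ _ (α + 1), mul_add, ← ih, Nat.totient_prime_pow_succ hp,
      Nat.cast_mul, Nat.cast_sub hp.one_le]
    push_cast
    ring

theorem euler_factor_eval_general (p : ℕ) (hp : p.Prime) (m : ℕ) (hm : 0 < m) (s : ℝ) :
    ∑' ν : ℕ, (ramanujanCoeff m (p ^ ν) : ℝ) / (p : ℝ) ^ ((ν : ℝ) * s)
      = (1 - (p : ℝ) ^ (-s)) *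
        ∑ j ∈ Finset.range (m.factorization p + 1), (p : ℝ) ^ (-(j : ℝ) * (s - 1)) := by
  set α := m.factorization p
  set x : ℝ := (p : ℝ) ^ (-s)
  have hp0 : (0 : ℝ) ≤ p := Nat.cast_nonneg p
  have hdenom (ν : ℕ) : (p : ℝ) ^ ((ν : ℝ) * s) = (x ^ ν)⁻¹ := by
    rw [← Real.rpow_natCast, ← Real.rpow_mul hp0, ← Real.rpow_neg hp0]
    ring_nf
  have hnum (j : ℕ) : (p : ℝ) ^ (-(j : ℝ) * (s - 1)) = ((p : ℝ) * x) ^ j := by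
    rw [show -(j : ℝ) * (s - 1) = (1 + -s) * j by ring, Real.rpow_mul hp0,
      Real.rpow_add (Nat.cast_pos.mpr hp.pos), Real.rpow_one, Real.rpow_natCast]
  simp only [hdenom, div_inv_eq_mul]
  rw [tsum_eq_sum (s := range (α + 2)) fun ν hν => by
      rw [ramanujanCoeff_prime_pow_of_lt hp hm.ne' (by rw [mem_range] at hν; omega)]; simp,
    sum_range_succ, ramanujanCoeff_prime_pow_factorization_succ hp hm.ne',
    sum_congr rfl fun ν hν => by
      rw [ramanujanCoeff_prime_pow_of_le hp hm.ne' (Nat.lt_succ_iff.mp (mem_range.mp hν))]]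
  push_cast
  rw [neg_mul, ← sub_eq_add_neg, sum_totient_prime_pow_mul_pow hp]
  simp only [hnum]

/-- Euler factor evaluation: for a prime `p`, `m > 0` with `p`-adic valuation `α`, and `s > 1`,
`∑_{ν=0}^∞ a_m(p^ν)/p^{νs} = (1 - p^{-s}) · ∑_{j=0}^{α} p^{-j(s-1)}`. -/
theorem euler_factor_eval (p : ℕ) (hp : p.Prime) (m : ℕ) (hm : 0 < m) (s : ℝ) (hs : 1 < s) :
    ∑' ν : ℕ, (ramanujanCoeff m (p ^ ν) : ℝ) / (p : ℝ) ^ ((ν : ℝ) * s)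
      = (1 - (p : ℝ) ^ (-s)) *
        ∑ j ∈ Finset.range (m.factorization p + 1), (p : ℝ) ^ (-(j : ℝ) * (s - 1)) :=
  euler_factor_eval_general p hp m hm s
end

section
/- Let N be a square-free positive integer and v a positive divisor of N. Then the set of pairs (x,y) ∈ ℤ² with gcd(x,y) = 1 is the disjoint union, over pairs (u₁,u₂) with u₁ | v and u₂ | (N/v), of the sets {(u₁x₁, u₂y₁) : (x₁,y₁) ∈ ℤ², gcd((N/(v·u₂))·u₁·x₁, (v/u₁)·u₂·y₁) = 1}. -/
/-- For square-free `N` and a positive divisor `v` of `N`: every coprime pair `(x,y) ∈ ℤ²`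
lies in exactly one of the sets indexed by pairs `(u₁,u₂)` with `u₁ | v`, `u₂ | (N/v)`,
namely `{(u₁x₁, u₂y₁) : gcd((N/(v·u₂))·u₁·x₁, (v/u₁)·u₂·y₁) = 1}`. -/
theorem coprime_pairs_partition (N v : ℕ) (hN : Squarefree N) (hv : v ∣ N) (hv0 : 0 < v)
    (x y : ℤ) (hxy : IsCoprime x y) :
    ∃! u : ℕ × ℕ, u.1 ∣ v ∧ u.2 ∣ N / v ∧
      ∃ x₁ y₁ : ℤ, x = (u.1 : ℤ) * x₁ ∧ y = (u.2 : ℤ) * y₁ ∧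
        IsCoprime (((N / (v * u.2)) * u.1 : ℕ) * x₁) (((v / u.1) * u.2 : ℕ) * y₁) := by
  have hN0 : N ≠ 0 := hN.ne_zero
  set a := x.natAbs with ha_def
  set b := y.natAbs with hb_def
  have hab : Nat.Coprime a b := Int.isCoprime_iff_gcd_eq_one.mp hxy
  set w := N / v with hw_def
  have hvw : v * w = N := Nat.mul_div_cancel' hv
  have hw0 : 0 < w := Nat.div_pos (Nat.le_of_dvd (Nat.pos_of_ne_zero hN0) hv) hv0
  have hsq : Squarefree (v * w) := by rw [hvw]; exact hN
  obtain ⟨cvw, hsv, hsw⟩ := Nat.squarefree_mul_iff.mp hsq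
  have hdiv : ∀ u₂ : ℕ, N / (v * u₂) = w / u₂ := fun u₂ => by
    rw [← Nat.div_div_eq_div_mul]
  -- translate the integer coprimality into a natural-number coprimality
  have key : ∀ (u₁ u₂ : ℕ) (x₁ y₁ : ℤ),
      IsCoprime (((N / (v * u₂)) * u₁ : ℕ) * x₁) (((v / u₁) * u₂ : ℕ) * y₁) ↔
      Nat.Coprime ((w / u₂) * u₁ * x₁.natAbs) ((v / u₁) * u₂ * y₁.natAbs) := by
    intro u₁ u₂ x₁ y₁
    rw [Int.isCoprime_iff_gcd_eq_one]
    unfold Int.gcd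
    rw [Int.natAbs_mul, Int.natAbs_mul, Int.natAbs_natCast, Int.natAbs_natCast, hdiv u₂]
  -- characterization of any valid index pair
  have char : ∀ (u₁ u₂ : ℕ), u₁ ∣ v → u₂ ∣ w →
      (∃ x₁ y₁ : ℤ, x = (u₁ : ℤ) * x₁ ∧ y = (u₂ : ℤ) * y₁ ∧
        IsCoprime (((N / (v * u₂)) * u₁ : ℕ) * x₁) (((v / u₁) * u₂ : ℕ) * y₁)) →
      u₁ = a.gcd v ∧ u₂ = b.gcd w := by
    intro u₁ u₂ hu₁v hu₂w ⟨x₁, y₁, hx1, hy1, hcop⟩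
    rw [key] at hcop
    have ha1 : a = u₁ * x₁.natAbs := by
      have := congrArg Int.natAbs hx1
      simpa [Int.natAbs_mul] using this
    have hb1 : b = u₂ * y₁.natAbs := by
      have := congrArg Int.natAbs hy1
      simpa [Int.natAbs_mul] using this
    have hveq : v = u₁ * (v / u₁) := (Nat.mul_div_cancel' hu₁v).symm
    have hweq : w = u₂ * (w / u₂) := (Nat.mul_div_cancel' hu₂w).symm
    have ca : Nat.Coprime x₁.natAbs (v / u₁) := by
      have h1 : x₁.natAbs ∣ (w / u₂) * u₁ * x₁.natAbs := dvd_mul_left _ _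
      have h2 : (v / u₁) ∣ (v / u₁) * u₂ * y₁.natAbs :=
        Dvd.dvd.mul_right (dvd_mul_right _ _) _
      exact Nat.Coprime.coprime_dvd_right h2 (Nat.Coprime.coprime_dvd_left h1 hcop)
    have cb : Nat.Coprime y₁.natAbs (w / u₂) := by
      have h1 : (w / u₂) ∣ (w / u₂) * u₁ * x₁.natAbs :=
        Dvd.dvd.mul_right (dvd_mul_right _ _) _
      have h2 : y₁.natAbs ∣ (v / u₁) * u₂ * y₁.natAbs := dvd_mul_left _ _
      exact (Nat.Coprime.coprime_dvd_right h2 (Nat.Coprime.coprime_dvd_left h1 hcop)).symm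
    constructor
    · conv_rhs => rw [ha1, hveq, Nat.gcd_mul_left, ca, mul_one]
    · conv_rhs => rw [hb1, hweq, Nat.gcd_mul_left, cb, mul_one]
  -- the canonical index pair
  set u₁ := a.gcd v with hu₁_def
  set u₂ := b.gcd w with hu₂_def
  have hu₁pos : 0 < u₁ := Nat.gcd_pos_of_pos_right _ hv0
  have hu₂pos : 0 < u₂ := Nat.gcd_pos_of_pos_right _ hw0
  have hu₁v : u₁ ∣ v := Nat.gcd_dvd_right _ _
  have hu₂w : u₂ ∣ w := Nat.gcd_dvd_right _ _
  have hu₁x : (u₁ : ℤ) ∣ x := Int.dvd_natAbs.mp (Int.natCast_dvd_natCast.mpr (Nat.gcd_dvd_left a v))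
  have hu₂y : (u₂ : ℤ) ∣ y := Int.dvd_natAbs.mp (Int.natCast_dvd_natCast.mpr (Nat.gcd_dvd_left b w))
  refine ⟨⟨u₁, u₂⟩, ⟨hu₁v, hu₂w, x / u₁, y / u₂, (Int.mul_ediv_cancel' hu₁x).symm,
    (Int.mul_ediv_cancel' hu₂y).symm, ?_⟩, ?_⟩
  · -- existence: the coprimality condition
    rw [key]
    have ha1 : (x / (u₁ : ℤ)).natAbs = a / u₁ := by
      have hx1 : x = (u₁ : ℤ) * (x / u₁) := (Int.mul_ediv_cancel' hu₁x).symm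
      have : a = u₁ * (x / (u₁ : ℤ)).natAbs := by
        have := congrArg Int.natAbs hx1
        simpa [Int.natAbs_mul] using this
      rw [this, Nat.mul_div_cancel_left _ hu₁pos]
    have hb1 : (y / (u₂ : ℤ)).natAbs = b / u₂ := by
      have hy1 : y = (u₂ : ℤ) * (y / u₂) := (Int.mul_ediv_cancel' hu₂y).symm
      have : b = u₂ * (y / (u₂ : ℤ)).natAbs := by
        have := congrArg Int.natAbs hy1
        simpa [Int.natAbs_mul] using this
      rw [this, Nat.mul_div_cancel_left _ hu₂pos]
    rw [ha1, hb1]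
    have c1 : Nat.Coprime (a / u₁) (v / u₁) := Nat.coprime_div_gcd_div_gcd hu₁pos
    have c2 : Nat.Coprime (b / u₂) (w / u₂) := Nat.coprime_div_gcd_div_gcd hu₂pos
    have hveq : v = u₁ * (v / u₁) := (Nat.mul_div_cancel' hu₁v).symm
    have hweq : w = u₂ * (w / u₂) := (Nat.mul_div_cancel' hu₂w).symm
    have p2 : Nat.Coprime (w / u₂) u₂ := by
      have : Squarefree (u₂ * (w / u₂)) := by rw [← hweq]; exact hsw
      exact (Nat.squarefree_mul_iff.mp this).1.symm
    have p4 : Nat.Coprime u₁ (v / u₁) := by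
      have : Squarefree (u₁ * (v / u₁)) := by rw [← hveq]; exact hsv
      exact (Nat.squarefree_mul_iff.mp this).1
    have p1 : Nat.Coprime (w / u₂) (v / u₁) :=
      Nat.Coprime.coprime_dvd_left (Nat.div_dvd_of_dvd hu₂w)
        (Nat.Coprime.coprime_dvd_right (Nat.div_dvd_of_dvd hu₁v) cvw.symm)
    have p5 : Nat.Coprime u₁ u₂ :=
      Nat.Coprime.coprime_dvd_right hu₂w (Nat.Coprime.coprime_dvd_left hu₁v cvw)
    have hadv : a / u₁ ∣ a := Nat.div_dvd_of_dvd (Nat.gcd_dvd_left _ _)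
    have hbdv : b / u₂ ∣ b := Nat.div_dvd_of_dvd (Nat.gcd_dvd_left _ _)
    have p6 : Nat.Coprime u₁ (b / u₂) :=
      Nat.Coprime.coprime_dvd_right hbdv (Nat.Coprime.coprime_dvd_left (Nat.gcd_dvd_left _ _) hab)
    have p8 : Nat.Coprime (a / u₁) u₂ :=
      Nat.Coprime.coprime_dvd_right (Nat.gcd_dvd_left _ _) (Nat.Coprime.coprime_dvd_left hadv hab)
    have p9 : Nat.Coprime (a / u₁) (b / u₂) :=
      Nat.Coprime.coprime_dvd_right hbdv (Nat.Coprime.coprime_dvd_left hadv hab)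
    exact (((p1.mul_right p2).mul_right c2.symm).mul
      ((p4.mul_right p5).mul_right p6)).mul ((c1.mul_right p8).mul_right p9)
  · rintro ⟨u₁', u₂'⟩ ⟨h1, h2, h3⟩
    obtain ⟨e1, e2⟩ := char u₁' u₂' h1 h2 h3
    simp [Prod.ext_iff, e1, e2]
end
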